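/- Let p = [b_1^{a_1} ⋯ b_r^{a_r}] (b_1 ≥ ⋯ ≥ b_r) be a symplectic partition of 2n with b_1 even, and set P := [p_1 p_1 (2n*+1)] where 2n* = Σ_{i : b_i odd} a_i. Then in the dominance order on partitions of 2n+1 one has P^t ≥ p^+. -/

import Mathlib

/-!
Let `λ_0 ≥ λ_1 ≥ ⋯` be the parts of `p`. Since `s_{j+1}(p₁) = ⌊λ_j/2⌋`, the partition
`P = [p₁ p₁ (2n*+1)]` has `s_{j+1}(P) = [j ≤ 2n*] + 2⌊λ_j/2⌋`, and these are the parts of `Pᵗ`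
in decreasing order. So the `m` largest parts of `Pᵗ` sum to `min(m, 2n*+1) + 2 Σ_{j<m} ⌊λ_j/2⌋`,
whereas those of `p⁺` sum to at most `1 + Σ_{j<m} λ_j = 1 + 2 Σ_{j<m} ⌊λ_j/2⌋ + #{j < m | λ_j odd}`.
As `λ_0` is even, at most `min(m - 1, 2n*)` of `λ_0, …, λ_{m-1}` are odd.
-/

namespace JiangWF

/-- `sCount p i` : the number of parts of `p` that are `≥ i`. -/
def sCount (p : Multiset ℕ) (i : ℕ) : ℕ := (p.filter (fun a => i ≤ a)).card

/-- `rCount p i` : the number of parts of `p` equal to `i`. -/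
def rCount (p : Multiset ℕ) (i : ℕ) : ℕ := p.count i

/-- The largest part of `p` (`0` for the empty partition). -/
def maxPart (p : Multiset ℕ) : ℕ := p.sup

/-- The smallest part of `p` (`0` for the empty partition). -/
noncomputable def minPart (p : Multiset ℕ) : ℕ := sInf {a : ℕ | a ∈ p}

/-- The transpose partition: its `i`-th part is `sCount p i`, for `1 ≤ i ≤ maxPart p`. -/
def transpose (p : Multiset ℕ) : Multiset ℕ :=
  (Multiset.range (maxPart p)).map fun i => sCount p (i + 1)

/-- The sum of the `m` largest parts of `p`. -/
def topSum (p : Multiset ℕ) (m : ℕ) : ℕ :=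
  ∑ i ∈ Finset.Icc 1 p.sum, min m (sCount p i)

/-- Dominance order: `domLE p q` means `p ≤ q`. -/
def domLE (p q : Multiset ℕ) : Prop := ∀ m, topSum p m ≤ topSum q m

/-- `p` is a partition of `N`: all parts positive, summing to `N`. -/
def IsPartitionOf (p : Multiset ℕ) (N : ℕ) : Prop := (∀ a ∈ p, 0 < a) ∧ p.sum = N

/-- Symplectic partition: every odd part occurs with even multiplicity. -/
def IsSymplectic (p : Multiset ℕ) : Prop := ∀ a, a % 2 = 1 → Even (p.count a)

/-- Orthogonal partition: every even part occurs with even multiplicity. -/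
def IsOrthogonal (p : Multiset ℕ) : Prop := ∀ a, a % 2 = 0 → Even (p.count a)

/-- `p^-`: decrease the smallest part by one (deleting it if it becomes `0`). -/
noncomputable def pMinus (p : Multiset ℕ) : Multiset ℕ :=
  if minPart p ≤ 1 then p.erase (minPart p)
  else (minPart p - 1) ::ₘ p.erase (minPart p)

/-- `p^+`: increase the largest part by one. -/
def pPlus (p : Multiset ℕ) : Multiset ℕ := (maxPart p + 1) ::ₘ p.erase (maxPart p)

/-- `p^{+-}`: increase the largest part by one and decrease the smallest by one. -/
noncomputable def pPM (p : Multiset ℕ) : Multiset ℕ := pMinus (pPlus p)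

/-- `p₁ = [⌊b_1/2⌋^{a_1} ⋯ ⌊b_r/2⌋^{a_r}]^t` (discarding zero entries before transposing). -/
def pOne (p : Multiset ℕ) : Multiset ℕ :=
  transpose ((p.map fun b => b / 2).filter fun x => 0 < x)

/-- `Σ_{i : b_i odd} a_i`: the number of odd parts of `p`. -/
def oddMult (p : Multiset ℕ) : ℕ := (p.filter fun a => a % 2 = 1).card

/-- `n* = ⌊(Σ_{i : b_i odd} a_i)/2⌋`. -/
def nStar (p : Multiset ℕ) : ℕ := oddMult p / 2

/-- Append an extra part `m` to `q`, omitted if `m = 0`. -/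
def addPart (m : ℕ) (q : Multiset ℕ) : Multiset ℕ := if m = 0 then q else m ::ₘ q

/-- `c` is the `Sp`-collapse of `p`: the maximal symplectic partition `≤ p` in dominance. -/
def IsSpCollapse (p c : Multiset ℕ) : Prop :=
  IsPartitionOf c p.sum ∧ IsSymplectic c ∧ domLE c p ∧
    ∀ c', IsPartitionOf c' p.sum → IsSymplectic c' → domLE c' p → domLE c' c

/-- `c` is the `SO`-collapse of `p`: the maximal orthogonal partition `≤ p` in dominance. -/
def IsSOCollapse (p c : Multiset ℕ) : Prop :=
  IsPartitionOf c p.sum ∧ IsOrthogonal c ∧ domLE c p ∧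
    ∀ c', IsPartitionOf c' p.sum → IsOrthogonal c' → domLE c' p → domLE c' c

/-- `e` is the `Sp`-expansion of `p`: the minimal special symplectic partition `≥ p`. -/
def IsSpExpansion (p e : Multiset ℕ) : Prop :=
  IsPartitionOf e p.sum ∧ IsSymplectic e ∧ IsSymplectic (transpose e) ∧ domLE p e ∧
    ∀ e', IsPartitionOf e' p.sum → IsSymplectic e' → IsSymplectic (transpose e') →
      domLE p e' → domLE e e'

/-- `e` is the `SO_{2n+1}`-expansion of `p`: the minimal special orthogonal partition `≥ p`
(odd case: special means the transpose is orthogonal). -/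
def IsSOOddExpansion (p e : Multiset ℕ) : Prop :=
  IsPartitionOf e p.sum ∧ IsOrthogonal e ∧ IsOrthogonal (transpose e) ∧ domLE p e ∧
    ∀ e', IsPartitionOf e' p.sum → IsOrthogonal e' → IsOrthogonal (transpose e') →
      domLE p e' → domLE e e'

/-- `e` is the `SO_{2n}`-expansion of `p`: the minimal special orthogonal partition `≥ p`
(even case: special means the transpose is symplectic). -/
def IsSOEvenExpansion (p e : Multiset ℕ) : Prop :=
  IsPartitionOf e p.sum ∧ IsOrthogonal e ∧ IsSymplectic (transpose e) ∧ domLE p e ∧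
    ∀ e', IsPartitionOf e' p.sum → IsOrthogonal e' → IsSymplectic (transpose e') →
      domLE p e' → domLE e e'

/-- `dim_C(q)` for a symplectic partition `q` of `2k`:
`2k² + k − (1/2)Σ s_i(q)² − (1/2)Σ_{i odd} r_i(q)` (note `2k² + k = (|q|² + |q|)/2`). -/
def dimC (p : Multiset ℕ) : ℚ :=
  ((p.sum : ℚ) ^ 2 + (p.sum : ℚ)) / 2
    - (∑ i ∈ Finset.Icc 1 p.sum, (sCount p i : ℚ) ^ 2) / 2
    - (∑ i ∈ Finset.Icc 1 p.sum, if i % 2 = 1 then (rCount p i : ℚ) else 0) / 2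

/-- `dim_B(q)` for an orthogonal partition `q` of `2k+1`:
`2k² + k − (1/2)Σ s_i(q)² + (1/2)Σ_{i odd} r_i(q)` (note `2k² + k = (|q|² − |q|)/2`). -/
def dimB (p : Multiset ℕ) : ℚ :=
  ((p.sum : ℚ) ^ 2 - (p.sum : ℚ)) / 2
    - (∑ i ∈ Finset.Icc 1 p.sum, (sCount p i : ℚ) ^ 2) / 2
    + (∑ i ∈ Finset.Icc 1 p.sum, if i % 2 = 1 then (rCount p i : ℚ) else 0) / 2

/-- `dim_D(q)` for an orthogonal partition `q` of `2k`:
`2k² − k − (1/2)Σ s_i(q)² + (1/2)Σ_{i odd} r_i(q)` (note `2k² − k = (|q|² − |q|)/2`). -/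
def dimD (p : Multiset ℕ) : ℚ :=
  ((p.sum : ℚ) ^ 2 - (p.sum : ℚ)) / 2
    - (∑ i ∈ Finset.Icc 1 p.sum, (sCount p i : ℚ) ^ 2) / 2
    + (∑ i ∈ Finset.Icc 1 p.sum, if i % 2 = 1 then (rCount p i : ℚ) else 0) / 2


open Finset

lemma card_filter_lt_range (m c : ℕ) : #{j ∈ range m | j < c} = min m c := by
  rw [show {j ∈ range m | j < c} = range (min m c) by ext; simp, card_range]

lemma sum_eq_two_mul_sum_div_two_add_sum_mod_two {ι : Type*} (s : Finset ι) (f : ι → ℕ) :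
    ∑ i ∈ s, f i = 2 * ∑ i ∈ s, f i / 2 + ∑ i ∈ s, f i % 2 := by
  rw [mul_sum, ← sum_add_distrib]
  exact sum_congr rfl fun i _ => (Nat.div_add_mod _ 2).symm

lemma lt_card_filter_range_iff {P : ℕ → Prop} [DecidablePred P] (hP : Antitone P) (N j : ℕ) :
    j < #{k ∈ range N | P k} ↔ j < N ∧ P j := by
  constructor
  · intro h
    by_contra! hj
    have : {k ∈ range N | P k} ⊆ range j := fun k hk => by
      simp only [mem_filter, mem_range] at hk ⊢
      by_contra! hjk
      exact hj (by omega) (hP hjk hk.2)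
    have := card_le_card this
    rw [card_range] at this
    omega
  · rintro ⟨hjN, hj⟩
    have : range (j + 1) ⊆ {k ∈ range N | P k} := fun k hk => by
      simp only [mem_filter, mem_range] at hk ⊢
      exact ⟨by omega, hP (by omega) hj⟩
    simpa using card_le_card this

lemma sCount_cons (a : ℕ) (q : Multiset ℕ) (i : ℕ) :
    sCount (a ::ₘ q) i = (if i ≤ a then 1 else 0) + sCount q i := by
  unfold sCount
  split_ifs <;> simp [*, add_comm]

lemma sCount_add (q r : Multiset ℕ) (i : ℕ) : sCount (q + r) i = sCount q i + sCount r i := by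
  simp [sCount, Multiset.filter_add]

lemma sCount_antitone (q : Multiset ℕ) : Antitone (sCount q) := fun _ _ hij =>
  Multiset.card_le_card (Multiset.monotone_filter_right q fun _ h => hij.trans h)

lemma sCount_le_card (q : Multiset ℕ) (i : ℕ) : sCount q i ≤ Multiset.card q :=
  Multiset.card_le_card (Multiset.filter_le _ _)

lemma sCount_succ_pos_iff (q : Multiset ℕ) (k : ℕ) : 0 < sCount q (k + 1) ↔ k < maxPart q := by
  rw [sCount, Multiset.card_pos_iff_exists_mem, maxPart, ← not_le, Multiset.sup_le]
  simp

lemma maxPart_le_sum (q : Multiset ℕ) : maxPart q ≤ q.sum :=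
  Multiset.sup_le.mpr fun _ hb => Multiset.le_sum_of_mem hb

lemma sum_range_sCount (q : Multiset ℕ) {N : ℕ} (hN : maxPart q ≤ N) :
    ∑ k ∈ range N, sCount q (k + 1) = q.sum := by
  induction q using Multiset.induction with
  | empty => simp [sCount]
  | cons a q ih =>
    have ha : a ≤ N := (Multiset.le_sup (Multiset.mem_cons_self a q)).trans hN
    have hq : maxPart q ≤ N := (Multiset.sup_mono (Multiset.subset_cons q a)).trans hN
    simp only [sCount_cons, sum_add_distrib, sum_boole, Multiset.sum_cons, ih hq,
      Nat.cast_id, Nat.succ_le_iff, card_filter_lt_range, min_eq_right ha]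

/-- The `j`-th largest part of `q`, counting from `j = 0`; it is `0` once `j ≥ card q`. -/
def nthPart (q : Multiset ℕ) (j : ℕ) : ℕ := #{k ∈ range (maxPart q) | j < sCount q (k + 1)}

lemma lt_nthPart_iff (q : Multiset ℕ) (j k : ℕ) : k < nthPart q j ↔ j < sCount q (k + 1) := by
  rw [nthPart, lt_card_filter_range_iff (fun _ _ hkl h => h.trans_le (sCount_antitone q (by omega)))]
  exact and_iff_right_of_imp fun h => (sCount_succ_pos_iff q k).mp (by omega)

lemma nthPart_zero (q : Multiset ℕ) : nthPart q 0 = maxPart q :=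
  eq_of_forall_lt_iff fun k => by rw [lt_nthPart_iff, sCount_succ_pos_iff]

lemma sCount_transpose_succ (q : Multiset ℕ) (j : ℕ) :
    sCount (transpose q) (j + 1) = nthPart q j := by
  simp only [sCount, transpose, nthPart, Multiset.filter_map, Multiset.card_map, Nat.succ_le_iff]
  rfl

lemma nthPart_transpose (q : Multiset ℕ) (j : ℕ) : nthPart (transpose q) j = sCount q (j + 1) :=
  eq_of_forall_lt_iff fun k => by rw [lt_nthPart_iff, sCount_transpose_succ, lt_nthPart_iff]

lemma topSum_eq_sum_range (q : Multiset ℕ) (m : ℕ) {N : ℕ} (hN : maxPart q ≤ N) :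
    topSum q m = ∑ k ∈ range N, min m (sCount q (k + 1)) := by
  have hzero : ∀ {M}, maxPart q ≤ M →
      ∑ k ∈ range M, min m (sCount q (k + 1)) = ∑ k ∈ range (maxPart q), min m (sCount q (k + 1)) :=
    fun hM => (sum_subset (range_subset_range.mpr hM) fun k _ hk => by
      simp [Nat.eq_zero_of_not_pos ((sCount_succ_pos_iff q k).not.mpr (by simpa using hk))]).symm
  rw [hzero hN, ← hzero (maxPart_le_sum q), topSum, ← Ico_add_one_right_eq_Icc,
    sum_Ico_eq_sum_range, Nat.add_sub_cancel]
  simp only [add_comm 1]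

lemma topSum_eq_sum_nthPart (q : Multiset ℕ) (m : ℕ) :
    topSum q m = ∑ j ∈ range m, nthPart q j := by
  simp only [topSum_eq_sum_range q m le_rfl, ← card_filter_lt_range, nthPart, card_filter]
  exact sum_comm

lemma topSum_of_card_le {q : Multiset ℕ} {m : ℕ} (hm : Multiset.card q ≤ m) :
    topSum q m = q.sum := by
  rw [topSum_eq_sum_range q m le_rfl, ← sum_range_sCount q le_rfl]
  exact sum_congr rfl fun k _ => min_eq_right ((sCount_le_card q _).trans hm)

lemma sum_range_nthPart {q : Multiset ℕ} {N : ℕ} (hN : Multiset.card q ≤ N) :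
    ∑ j ∈ range N, nthPart q j = q.sum := by
  rw [← topSum_eq_sum_nthPart, topSum_of_card_le hN]

/-- The partition `[⌊b_1/2⌋^{a_1} ⋯ ⌊b_r/2⌋^{a_r}]`, whose transpose is `pOne`. -/
def halfParts (q : Multiset ℕ) : Multiset ℕ := (q.map fun b => b / 2).filter fun x => 0 < x

lemma sCount_halfParts_succ (q : Multiset ℕ) (k : ℕ) :
    sCount (halfParts q) (k + 1) = sCount q (2 * k + 2) := by
  simp only [sCount, halfParts, Multiset.filter_filter, Multiset.filter_map, Multiset.card_map]
  congr 1
  exact Multiset.filter_congr fun b _ => by simp only [Function.comp]; omega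

lemma nthPart_halfParts (q : Multiset ℕ) (j : ℕ) : nthPart (halfParts q) j = nthPart q j / 2 :=
  eq_of_forall_lt_iff fun k => by
    rw [lt_nthPart_iff, sCount_halfParts_succ, show 2 * k + 2 = (2 * k + 1) + 1 by ring,
      ← lt_nthPart_iff]
    omega

lemma sCount_pOne_succ (q : Multiset ℕ) (j : ℕ) : sCount (pOne q) (j + 1) = nthPart q j / 2 := by
  rw [pOne, ← halfParts, sCount_transpose_succ, nthPart_halfParts]

lemma card_halfParts_le (q : Multiset ℕ) : Multiset.card (halfParts q) ≤ Multiset.card q :=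
  (Multiset.card_le_card (Multiset.filter_le _ _)).trans_eq (Multiset.card_map _ _)

lemma sum_eq_two_mul_sum_halfParts_add_oddMult (q : Multiset ℕ) :
    q.sum = 2 * (halfParts q).sum + oddMult q := by
  induction q using Multiset.induction with
  | empty => simp [halfParts, oddMult]
  | cons a q ih =>
    simp only [halfParts, oddMult, Multiset.map_cons, Multiset.filter_cons, Multiset.sum_cons,
      Multiset.sum_add, Multiset.card_add] at ih ⊢
    split_ifs <;> simp <;> omega

lemma sum_range_nthPart_mod_two {q : Multiset ℕ} {N : ℕ} (hN : Multiset.card q ≤ N) :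
    ∑ j ∈ range N, nthPart q j % 2 = oddMult q := by
  have hhalf : ∑ j ∈ range N, nthPart q j / 2 = (halfParts q).sum := by
    simp only [← nthPart_halfParts, sum_range_nthPart ((card_halfParts_le q).trans hN)]
  have hsplit := sum_eq_two_mul_sum_div_two_add_sum_mod_two (range N) (nthPart q)
  have := sum_eq_two_mul_sum_halfParts_add_oddMult q
  rw [sum_range_nthPart hN] at hsplit
  omega

lemma sum_range_nthPart_mod_two_le (q : Multiset ℕ) (m : ℕ) :
    ∑ j ∈ range m, nthPart q j % 2 ≤ oddMult q :=
  calc ∑ j ∈ range m, nthPart q j % 2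
      ≤ ∑ j ∈ range (m + Multiset.card q), nthPart q j % 2 :=
        sum_le_sum_of_subset (range_subset_range.mpr (by omega))
    _ = oddMult q := sum_range_nthPart_mod_two (by omega)

/-- At most `m - 1` of the `m` largest parts are odd, the largest one being even. -/
lemma sum_range_nthPart_mod_two_add_le {q : Multiset ℕ} (hq : maxPart q % 2 = 0) (m : ℕ) :
    ∑ j ∈ range m, nthPart q j % 2 + min 1 m ≤ min m (oddMult q + 1) := by
  have htotal := sum_range_nthPart_mod_two_le q m
  cases m with
  | zero => simp
  | succ m =>
    have htail : ∑ j ∈ range m, nthPart q (j + 1) % 2 ≤ m :=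
      (sum_le_sum fun j _ => Nat.le_of_lt_succ (Nat.mod_lt _ two_pos)).trans_eq (by simp)
    rw [sum_range_succ', nthPart_zero, hq] at htotal ⊢
    omega

lemma maxPart_mem {q : Multiset ℕ} (hq : q ≠ 0) : maxPart q ∈ q := by
  obtain ⟨b, hb, he⟩ := Finset.exists_mem_eq_sup q.toFinset (by simpa) id
  rw [Finset.sup_def, Multiset.toFinset_val, Multiset.map_id, Multiset.sup_dedup] at he
  simpa [maxPart, he] using hb

lemma sCount_pPlus_succ_le (q : Multiset ℕ) (k : ℕ) :
    sCount (pPlus q) (k + 1) ≤ sCount q (k + 1) + if k = maxPart q then 1 else 0 := by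
  rcases eq_or_ne q 0 with rfl | hq
  · simp only [pPlus, maxPart, Multiset.sup_zero, Multiset.erase_zero, sCount_cons, bot_eq_zero]
    split_ifs <;> omega
  · have hq := congrArg (sCount · (k + 1)) (Multiset.cons_erase (maxPart_mem hq))
    simp only [sCount_cons] at hq
    rw [pPlus, sCount_cons, ← hq]
    split_ifs <;> omega

lemma maxPart_pPlus_le (q : Multiset ℕ) : maxPart (pPlus q) ≤ maxPart q + 1 :=
  Multiset.sup_le.mpr fun b hb => by
    rcases Multiset.mem_cons.mp hb with rfl | hb
    · exact le_rfl
    · exact (Multiset.le_sup (Multiset.mem_of_mem_erase hb)).trans (Nat.le_succ _)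

lemma topSum_pPlus_le (q : Multiset ℕ) (m : ℕ) : topSum (pPlus q) m ≤ topSum q m + min 1 m := by
  rw [topSum_eq_sum_range _ m (maxPart_pPlus_le q), topSum_eq_sum_range q m (Nat.le_succ _)]
  calc ∑ k ∈ range (maxPart q + 1), min m (sCount (pPlus q) (k + 1))
      ≤ ∑ k ∈ range (maxPart q + 1),
          (min m (sCount q (k + 1)) + if k = maxPart q then min 1 m else 0) :=
        sum_le_sum fun k _ => by have := sCount_pPlus_succ_le q k; split_ifs at * <;> omega
    _ = _ := by simp [sum_add_distrib]

theorem transpose_ge_pPlus_general (p : Multiset ℕ)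
    (hb1 : maxPart p % 2 = 0) :
    domLE (pPlus p) (transpose ((oddMult p + 1) ::ₘ (pOne p + pOne p))) := by
  intro m
  have hP : ∀ j, sCount ((oddMult p + 1) ::ₘ (pOne p + pOne p)) (j + 1)
      = (if j < oddMult p + 1 then 1 else 0) + 2 * (nthPart p j / 2) := fun j => by
    simp only [sCount_cons, sCount_add, sCount_pOne_succ, two_mul, Nat.add_one_le_iff]
  calc topSum (pPlus p) m
      ≤ topSum p m + min 1 m := topSum_pPlus_le p m
    _ = 2 * ∑ j ∈ range m, nthPart p j / 2 + (∑ j ∈ range m, nthPart p j % 2 + min 1 m) := by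
        rw [topSum_eq_sum_nthPart, sum_eq_two_mul_sum_div_two_add_sum_mod_two, add_assoc]
    _ ≤ 2 * ∑ j ∈ range m, nthPart p j / 2 + min m (oddMult p + 1) :=
        Nat.add_le_add_left (sum_range_nthPart_mod_two_add_le hb1 m) _
    _ = topSum (transpose ((oddMult p + 1) ::ₘ (pOne p + pOne p))) m := by
        simp only [topSum_eq_sum_nthPart, nthPart_transpose, hP, sum_add_distrib, sum_boole,
          card_filter_lt_range, ← mul_sum, Nat.cast_id, add_comm]

/-- `p` a symplectic partition of `2n` with `b₁` (the largest part) even,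
`P = [p₁ p₁ (2n*+1)]` with `2n* = Σ_{b_i odd} a_i`.  Then `P^t ≥ p^+` in the dominance
order on partitions of `2n+1`. -/
theorem transpose_ge_pPlus (n : ℕ) (p : Multiset ℕ) (hne : p ≠ 0)
    (hp : IsPartitionOf p (2 * n)) (hsymp : IsSymplectic p)
    (hb1 : maxPart p % 2 = 0) :
    domLE (pPlus p) (transpose ((oddMult p + 1) ::ₘ (pOne p + pOne p))) :=
  transpose_ge_pPlus_general p hb1

end JiangWF
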